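/- (Proper labelings of arbitrary connected labels are centre-disjoint) Let P be a finite set of points in ℝ², and for each p ∈ P let L_p ⊆ ℝ² be a compact connected set with p ∈ L_p, of circumradius r_p = max{‖x − p‖ : x ∈ L_p} about p. Suppose that for all angles θ and all distinct p, q ∈ P, the rotated sets (L_p)_θ and (L_q)_θ about their respective anchors are disjoint. Then for all distinct p, q ∈ P, ‖p − q‖ > max(r_p, r_q); i.e., the disks D(p, r_p) are centre-disjoint. -/

import Mathlib

open Real Set Metric

/-- Rotation of the plane by angle `θ` about the origin. -/
noncomputable def rotv (θ : ℝ) (v : EuclideanSpace ℝ (Fin 2)) : EuclideanSpace ℝ (Fin 2) :=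
  WithLp.toLp 2 ![Real.cos θ * v 0 - Real.sin θ * v 1, Real.sin θ * v 0 + Real.cos θ * v 1]

/-- The set `A` rotated rigidly by angle `θ` about the anchor point `p`. -/
noncomputable def rotAbout (p : EuclideanSpace ℝ (Fin 2)) (θ : ℝ)
    (A : Set (EuclideanSpace ℝ (Fin 2))) : Set (EuclideanSpace ℝ (Fin 2)) :=
  (fun a => p + rotv θ (a - p)) '' A

/-!
If `‖q - p‖ ≤ r_p`, then since `L_p` is connected and contains both `p` and a point at distance
`r_p` from `p`, it contains a point `x` with `‖x - p‖ = ‖q - p‖`. A rotation about `p` carries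
`x` to `q`, while every rotation of `L_q` about `q` still contains the anchor `q`; so the two
rotated labels meet, contradicting properness.
-/

namespace EuclideanSpace

def toComplex (v : EuclideanSpace ℝ (Fin 2)) : ℂ := ⟨v 0, v 1⟩

lemma norm_toComplex (v : EuclideanSpace ℝ (Fin 2)) : ‖toComplex v‖ = ‖v‖ := by
  rw [EuclideanSpace.norm_eq, Complex.norm_def, Complex.normSq_mk, Fin.sum_univ_two]
  simp [toComplex, sq]

lemma toComplex_injective : Function.Injective toComplex := by
  intro v w hvw
  simp only [toComplex, Complex.mk.injEq] at hvw
  ext i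
  fin_cases i
  exacts [hvw.1, hvw.2]

end EuclideanSpace

open EuclideanSpace

lemma toComplex_rotv (θ : ℝ) (v : EuclideanSpace ℝ (Fin 2)) :
    toComplex (rotv θ v) = Complex.exp (θ * Complex.I) * toComplex v := by
  apply Complex.ext <;>
    simp [toComplex, rotv, Complex.exp_mul_I, Complex.mul_re, Complex.mul_im,
      ← Complex.ofReal_cos, ← Complex.ofReal_sin, add_comm]

lemma rotv_zero (θ : ℝ) : rotv θ 0 = 0 := by
  ext i
  fin_cases i <;> simp [rotv]

lemma Complex.exists_exp_mul_I_mul_eq {z w : ℂ} (h : ‖z‖ = ‖w‖) :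
    ∃ θ : ℝ, Complex.exp (θ * Complex.I) * z = w := by
  refine ⟨w.arg - z.arg, ?_⟩
  calc Complex.exp ((w.arg - z.arg : ℝ) * Complex.I) * z
      = Complex.exp ((w.arg - z.arg : ℝ) * Complex.I) *
          (‖z‖ * Complex.exp (z.arg * Complex.I)) := by rw [Complex.norm_mul_exp_arg_mul_I]
    _ = ‖w‖ * Complex.exp (w.arg * Complex.I) := by
      rw [h, mul_left_comm, ← Complex.exp_add]
      push_cast
      ring_nf
    _ = w := Complex.norm_mul_exp_arg_mul_I w

lemma exists_rotv_eq {v w : EuclideanSpace ℝ (Fin 2)} (h : ‖v‖ = ‖w‖) :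
    ∃ θ : ℝ, rotv θ v = w := by
  obtain ⟨θ, hθ⟩ := Complex.exists_exp_mul_I_mul_eq (z := toComplex v) (w := toComplex w)
    (by rw [norm_toComplex, norm_toComplex, h])
  exact ⟨θ, toComplex_injective (by rw [toComplex_rotv, hθ])⟩

lemma mem_rotAbout_self {p : EuclideanSpace ℝ (Fin 2)} {A : Set (EuclideanSpace ℝ (Fin 2))}
    (hp : p ∈ A) (θ : ℝ) : p ∈ rotAbout p θ A :=
  ⟨p, hp, by simp [rotv_zero]⟩

lemma exists_mem_rotAbout_of_norm_le {p q x : EuclideanSpace ℝ (Fin 2)}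
    {A : Set (EuclideanSpace ℝ (Fin 2))} (hA : IsPreconnected A) (hp : p ∈ A) (hx : x ∈ A)
    (hq : ‖q - p‖ ≤ ‖x - p‖) : ∃ θ : ℝ, q ∈ rotAbout p θ A := by
  have hsphere : ‖q - p‖ ∈ (fun y => ‖y - p‖) '' A :=
    (hA.image _ (by fun_prop : Continuous fun y => ‖y - p‖).continuousOn).Icc_subset
      ⟨p, hp, by simp⟩ ⟨x, hx, rfl⟩ ⟨norm_nonneg _, hq⟩
  obtain ⟨y, hy, hyq⟩ := hsphere
  obtain ⟨θ, hθ⟩ := exists_rotv_eq hyq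
  exact ⟨θ, y, hy, by simp only [hθ, add_sub_cancel]⟩

lemma lt_dist_of_forall_disjoint_rotAbout {p q : EuclideanSpace ℝ (Fin 2)}
    {A B : Set (EuclideanSpace ℝ (Fin 2))} {r : ℝ} (hA : IsPreconnected A) (hpA : p ∈ A)
    (hqB : q ∈ B) (hr : r ∈ (fun x => ‖x - p‖) '' A)
    (h : ∀ θ : ℝ, Disjoint (rotAbout p θ A) (rotAbout q θ B)) : r < dist p q := by
  obtain ⟨x, hx, rfl⟩ := hr
  by_contra! hle
  obtain ⟨θ, hθ⟩ := exists_mem_rotAbout_of_norm_le hA hpA hx (by rwa [← dist_eq_norm' p q])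
  exact (h θ).ne_of_mem hθ (mem_rotAbout_self hqB θ) rfl

theorem stmt16_general (P : Finset (EuclideanSpace ℝ (Fin 2)))
    (L : EuclideanSpace ℝ (Fin 2) → Set (EuclideanSpace ℝ (Fin 2)))
    (r : EuclideanSpace ℝ (Fin 2) → ℝ)
    (hconn : ∀ p ∈ P, IsConnected (L p))
    (hmem : ∀ p ∈ P, p ∈ L p)
    (hrad : ∀ p ∈ P, IsGreatest ((fun x => ‖x - p‖) '' L p) (r p))
    (h : ∀ θ : ℝ, ∀ p ∈ P, ∀ q ∈ P, p ≠ q →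
      Disjoint (rotAbout p θ (L p)) (rotAbout q θ (L q))) :
    ∀ p ∈ P, ∀ q ∈ P, p ≠ q → dist p q > max (r p) (r q) := by
  intro p hp q hq hpq
  refine max_lt ?_ ?_
  · exact lt_dist_of_forall_disjoint_rotAbout (hconn p hp).isPreconnected (hmem p hp)
      (hmem q hq) (hrad p hp).1 fun θ => h θ p hp q hq hpq
  · rw [dist_comm]
    exact lt_dist_of_forall_disjoint_rotAbout (hconn q hq).isPreconnected (hmem q hq)
      (hmem p hp) (hrad q hq).1 fun θ => h θ q hq p hp hpq.symm

/-- Proper labelings of arbitrary compact connected labels are centre-disjoint: if the labels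
never intersect under simultaneous rotation about their anchors, then any two distinct anchors
are at distance greater than the larger of the two circumradii. -/
theorem stmt16 (P : Finset (EuclideanSpace ℝ (Fin 2)))
    (L : EuclideanSpace ℝ (Fin 2) → Set (EuclideanSpace ℝ (Fin 2)))
    (r : EuclideanSpace ℝ (Fin 2) → ℝ)
    (hcomp : ∀ p ∈ P, IsCompact (L p))
    (hconn : ∀ p ∈ P, IsConnected (L p))
    (hmem : ∀ p ∈ P, p ∈ L p)
    (hrad : ∀ p ∈ P, IsGreatest ((fun x => ‖x - p‖) '' L p) (r p))
    (h : ∀ θ : ℝ, ∀ p ∈ P, ∀ q ∈ P, p ≠ q →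
      Disjoint (rotAbout p θ (L p)) (rotAbout q θ (L q))) :
    ∀ p ∈ P, ∀ q ∈ P, p ≠ q → dist p q > max (r p) (r q) :=
  stmt16_general P L r hconn hmem hrad h
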